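/- Let X be a quantum-Wajsberg algebra and F a deductive system of X. If x ≡_F y, then x* ≡_F y*. -/
import Mathlib


/-- The underlying involutive bounded BE algebra of a quantum-Wajsberg algebra. -/
class PreQW (X : Type*) where
  imp : X → X → X
  zero : X
  one : X
  imp_self : ∀ x : X, imp x x = one
  imp_one : ∀ x : X, imp x one = one
  one_imp : ∀ x : X, imp one x = x
  exchange : ∀ x y z : X, imp x (imp y z) = imp y (imp x z)
  zero_imp : ∀ x : X, imp zero x = one
  involutive : ∀ x : X, imp (imp x zero) zero = x

namespace PreQW

variable {X : Type*} [PreQW X]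

/-- `x* = x → 0`. -/
def qstar (x : X) : X := imp x zero

/-- `x ⊔ y = (x → y) → y`. -/
def qsup (x y : X) : X := imp (imp x y) y

/-- `x ⊓ y = ((x* → y*) → y*)*`. -/
def qinf (x y : X) : X := qstar (imp (imp (qstar x) (qstar y)) (qstar y))

/-- `x ⊙ y = (x → y*)*`. -/
def qprod (x y : X) : X := qstar (imp x (qstar y))

/-- `x ≤ y` iff `x → y = 1`. -/
def qle (x y : X) : Prop := imp x y = one

/-- `x ≤_Q y` iff `x = x ⊓ y`. -/
def qleQ (x y : X) : Prop := x = qinf x y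

/-- `xⁿ = x ⊙ ⋯ ⊙ x` (`n` factors), with `x⁰ = 1`. -/
def qpow (x : X) : ℕ → X
  | 0 => one
  | n + 1 => qprod x (qpow x n)

/-- A filter: nonempty, closed under `⊙`, and `x ∈ F` implies `y → x ∈ F`. -/
def IsFilter (F : Set X) : Prop :=
  F.Nonempty ∧ (∀ x ∈ F, ∀ y ∈ F, qprod x y ∈ F) ∧ (∀ x ∈ F, ∀ y : X, imp y x ∈ F)

/-- A deductive system: contains `1` and is closed under modus ponens. -/
def IsDS (F : Set X) : Prop :=
  (one : X) ∈ F ∧ ∀ x ∈ F, ∀ y : X, imp x y ∈ F → y ∈ F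

/-- A maximal filter: proper and not strictly contained in any proper filter. -/
def IsMaximal (F : Set X) : Prop :=
  IsFilter F ∧ F ≠ Set.univ ∧
    ∀ G : Set X, IsFilter G → F ⊆ G → G ≠ Set.univ → G = F

/-- The strong maximality condition: for every `x ∉ F`, `(xⁿ)* ∈ F` for some `n ≥ 1`. -/
def StrongMaxCond (F : Set X) : Prop :=
  ∀ x : X, x ∉ F → ∃ n : ℕ, 1 ≤ n ∧ qstar (qpow x n) ∈ F

/-- A strongly maximal filter. -/
def IsStronglyMaximal (F : Set X) : Prop :=
  IsFilter F ∧ StrongMaxCond F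

/-- `x ∼ y`: there is `α` with `x ≤ α ≤ x` and `y ≤ α ≤ y`. -/
def Persp (x y : X) : Prop :=
  ∃ α : X, imp x α = one ∧ imp α x = one ∧ imp y α = one ∧ imp α y = one

/-- `x ≡_F y` iff there is `λ` with `x, y ≤_Q λ` and `λ → x, λ → y ∈ F`. -/
def equivF (F : Set X) (x y : X) : Prop :=
  ∃ l : X, qleQ x l ∧ qleQ y l ∧ imp l x ∈ F ∧ imp l y ∈ F

end PreQW

/-- A quantum-Wajsberg algebra: an involutive BE algebra satisfying axiom (QW). -/
class QW (X : Type*) extends PreQW X where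
  qw : ∀ x y z : X,
    imp x (PreQW.qinf (PreQW.qinf x y) (PreQW.qinf z x)) =
      PreQW.qinf (imp x y) (imp x z)

open PreQW

section Aux

variable {X : Type*} [PreQW X]

lemma aux_star_star (x : X) : qstar (qstar x) = x := PreQW.involutive x

lemma aux_arrow_star (x y : X) : imp x (qstar y) = imp y (qstar x) :=
  PreQW.exchange x y PreQW.zero

lemma aux_contrap (x y : X) : imp x y = imp (qstar y) (qstar x) := by
  conv_lhs => rw [← aux_star_star y]
  exact aux_arrow_star x (qstar y)

lemma aux_qstar_zero : qstar (PreQW.zero : X) = PreQW.one := PreQW.imp_self _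

lemma aux_qstar_one : qstar (PreQW.one : X) = PreQW.zero := PreQW.one_imp _

lemma aux_qinf_zero (x : X) : qinf x PreQW.zero = PreQW.zero := by
  unfold qinf
  rw [aux_qstar_zero, PreQW.imp_one]
  exact aux_qstar_one

lemma aux_zero_qinf (x : X) : qinf PreQW.zero x = PreQW.zero := by
  unfold qinf
  rw [aux_qstar_zero, PreQW.one_imp, PreQW.imp_self]
  exact aux_qstar_one

lemma aux_prod_comm (x y : X) : qprod x y = qprod y x := by
  unfold qprod
  rw [aux_arrow_star]

lemma aux_qstar_prod (x y : X) : qstar (qprod x y) = imp x (qstar y) :=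
  aux_star_star _

lemma aux_prod_assoc (x y z : X) :
    qprod (qprod x y) z = qprod x (qprod y z) := by
  unfold qprod
  apply congrArg qstar
  rw [aux_arrow_star (qstar (imp x (qstar y))) z, aux_star_star,
    PreQW.exchange z x (qstar y), aux_arrow_star z y, aux_star_star]

lemma aux_qinf_eq (x y : X) : qinf x y = qprod (imp y x) y := by
  unfold qinf qprod
  rw [← aux_contrap y x]

end Aux

section AuxQW

variable {X : Type*} [QW X]

/-- Key fact from (QW) with `y := 0`: `x* = x* ⊓ (x → z)`. -/
lemma aux_key (x z : X) : qstar x = qinf (qstar x) (imp x z) := by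
  have h := QW.qw x PreQW.zero z
  rw [aux_qinf_zero, aux_zero_qinf] at h
  exact h

end AuxQW

/-- Proposition 4.6: `x ≡_F y` implies `x* ≡_F y*`. -/
theorem qw_prop_4_6 {X : Type*} [QW X] (F : Set X) (hF : IsDS F)
    (x y : X) (h : equivF F x y) : equivF F (qstar x) (qstar y) := by
  obtain ⟨l, hx, hy, hfx, hfy⟩ := h
  -- notation
  set a := imp l y with ha
  set a' := imp l x with ha'
  have hx' : x = qprod a' l := by
    rw [qleQ, aux_qinf_eq] at hx; exact hx
  have hy' : y = qprod a l := by
    rw [qleQ, aux_qinf_eq] at hy; exact hy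
  -- the common element c = x ⊙ a = y ⊙ a'
  have lcomm : ∀ u v w : X, qprod u (qprod v w) = qprod v (qprod u w) := by
    intro u v w
    rw [← aux_prod_assoc, aux_prod_comm u v, aux_prod_assoc]
  have hc : qprod x a = qprod y a' := by
    rw [hx', hy', aux_prod_assoc, aux_prod_assoc, aux_prod_comm l a,
      lcomm a' a l, aux_prod_comm l a']
  have mux : qstar (qprod x a) = imp x (qstar a) := aux_qstar_prod x a
  have muy : qstar (qprod x a) = imp y (qstar a') := by
    rw [hc]; exact aux_qstar_prod y a'
  refine ⟨qstar (qprod x a), ?_, ?_, ?_, ?_⟩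
  · rw [qleQ, mux]; exact aux_key x (qstar a)
  · rw [qleQ, muy]; exact aux_key y (qstar a')
  · rw [mux]
    have h1 : imp a (imp (imp x (qstar a)) (qstar x)) = PreQW.one := by
      rw [PreQW.exchange, aux_arrow_star a x, PreQW.imp_self]
    exact hF.2 a hfy _ (by rw [h1]; exact hF.1)
  · rw [muy]
    have h1 : imp a' (imp (imp y (qstar a')) (qstar y)) = PreQW.one := by
      rw [PreQW.exchange, aux_arrow_star a' y, PreQW.imp_self]
    exact hF.2 a' hfx _ (by rw [h1]; exact hF.1)
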